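/- Let a_j = i^{j−1} for j = 1, 2, 3, 4, with indices taken cyclically modulo 4 (a₅ = a₁, a₀ = a₄). For every natural number p, the sum S_p := ∑_{j=1}^4 (−1)^j · a_j^{p+2} · (a_{j+1} − a_{j−1}) / ((a_{j+1} − a_j)·(a_j − a_{j−1})) equals 4i if p ≡ 1 (mod 4), and equals 0 otherwise. -/

import Mathlib

/-!
Since `a_{j+1} = i a_j` and `a_{j-1} = -i a_j`, the `j`-th summand collapses to `i a_j^{p+3}`
(using `(-1)^j = -a_j^2`). Hence `S_p = i ∑_{k<4} (i^{p+3})^k`, a sum of powers of a fourth root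
of unity, which is `4i` when `4 ∣ p + 3` and `0` otherwise.
-/

/-- The vertices `a_j = i^{j−1}` of the standard quad `(1, i, −1, −i)`, indexed cyclically by
`j : ℤ` (the formula is automatically `4`-periodic since `i⁴ = 1`). -/
noncomputable def quadVertex (j : ℤ) : ℂ := Complex.I ^ (j - 1)

open Finset Complex

theorem geom_sum_eq_zero_of_pow_eq_one {R : Type*} [CommRing R] [IsDomain R] {x : R} {n : ℕ}
    (hxn : x ^ n = 1) (hx : x ≠ 1) : ∑ i ∈ range n, x ^ i = 0 := by
  have h := geom_sum_mul x n
  rw [hxn, sub_self, mul_eq_zero] at h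
  exact h.resolve_right (sub_ne_zero.mpr hx)

theorem IsPrimitiveRoot.sum_range_pow_pow {R : Type*} [CommRing R] [IsDomain R] {ζ : R} {n : ℕ}
    (hζ : IsPrimitiveRoot ζ n) (m : ℕ) :
    ∑ i ∈ range n, (ζ ^ m) ^ i = if n ∣ m then (n : R) else 0 := by
  split_ifs with hdvd
  · simp [(hζ.pow_eq_one_iff_dvd m).mpr hdvd]
  · refine geom_sum_eq_zero_of_pow_eq_one ?_ ((hζ.pow_eq_one_iff_dvd m).not.mpr hdvd)
    rw [← pow_mul, mul_comm, pow_mul, hζ.pow_eq_one, one_pow]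

theorem quadVertex_ne_zero (j : ℤ) : quadVertex j ≠ 0 := zpow_ne_zero _ I_ne_zero

theorem quadVertex_add_one (j : ℤ) : quadVertex (j + 1) = I * quadVertex j := by
  rw [quadVertex, quadVertex, add_sub_right_comm, zpow_add_one₀ I_ne_zero, mul_comm]

theorem quadVertex_sub_one (j : ℤ) : quadVertex (j - 1) = -I * quadVertex j := by
  rw [quadVertex, quadVertex, zpow_sub_one₀ I_ne_zero, inv_I, mul_comm]

theorem neg_one_zpow_eq_neg_quadVertex_sq (j : ℤ) : (-1 : ℂ) ^ j = -quadVertex j ^ 2 :=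
  calc (-1 : ℂ) ^ j = -(-1) ^ (j - 1) := by rw [zpow_sub_one₀ (by norm_num)]; simp
  _ = -(I ^ 2) ^ (j - 1) := by rw [I_sq]
  _ = -quadVertex j ^ 2 := by
    rw [quadVertex, ← zpow_natCast, ← zpow_natCast, ← zpow_mul, ← zpow_mul, mul_comm]

theorem quadVertex_summand_eq (p : ℕ) (j : ℤ) :
    (-1 : ℂ) ^ j * quadVertex j ^ (p + 2) * (quadVertex (j + 1) - quadVertex (j - 1)) /
        ((quadVertex (j + 1) - quadVertex j) * (quadVertex j - quadVertex (j - 1))) =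
      I * quadVertex j ^ (p + 3) := by
  rw [quadVertex_add_one, quadVertex_sub_one, neg_one_zpow_eq_neg_quadVertex_sq]
  have hden : (I * quadVertex j - quadVertex j) * (quadVertex j - -I * quadVertex j) =
      -2 * quadVertex j ^ 2 := by
    linear_combination quadVertex j ^ 2 * I_sq
  rw [hden, div_eq_iff (by simpa using quadVertex_ne_zero j)]
  ring

theorem sum_Icc_one_four_quadVertex_pow (m : ℕ) :
    ∑ j ∈ Icc (1 : ℤ) 4, quadVertex j ^ m = ∑ k ∈ range 4, (I ^ m) ^ k := by
  refine sum_nbij' (fun j => (j - 1).toNat) (fun k => k + 1) ?_ ?_ ?_ ?_ ?_ <;>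
    simp only [mem_Icc, mem_range]
  any_goals omega
  intro j hj
  rw [← pow_mul, mul_comm, pow_mul, ← zpow_natCast I, Int.toNat_of_nonneg (by omega), quadVertex]

/-- **Weighted power sums at fourth roots of unity.**
For every natural number `p`, the sum
`S_p = ∑_{j=1}^4 (−1)^j a_j^{p+2} (a_{j+1} − a_{j−1})/((a_{j+1} − a_j)(a_j − a_{j−1}))`
equals `4i` if `p ≡ 1 (mod 4)` and `0` otherwise. -/
theorem weighted_power_sum_roots_of_unity (p : ℕ) :
    ∑ j ∈ Finset.Icc (1 : ℤ) 4,
        (-1 : ℂ) ^ j * (quadVertex j) ^ (p + 2) *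
          (quadVertex (j + 1) - quadVertex (j - 1)) /
          ((quadVertex (j + 1) - quadVertex j) * (quadVertex j - quadVertex (j - 1)))
      = if p % 4 = 1 then 4 * Complex.I else 0 := by
  simp_rw [quadVertex_summand_eq]
  rw [← mul_sum, sum_Icc_one_four_quadVertex_pow, isPrimitiveRoot_I.sum_range_pow_pow]
  have hdvd : 4 ∣ p + 3 ↔ p % 4 = 1 := by omega
  simp only [hdvd]
  split_ifs <;> push_cast <;> ring
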